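/- arXiv:2105.11027 — 3 statements merged into one kernel-verified Lean document; each statement's English description precedes it below -/
import Mathlib

section
/- Let q be odd and χ a nontrivial character of (F_q,+). Then: (1) any two irreducible complex representations of the Heisenberg group H(W), W = F_q^{2n}, with central character χ are isomorphic, and any such representation has dimension q^n; (2) if L' ≤ H(W) is a maximal abelian subgroup containing the center Z and χ' is any character of L' with χ'(0,t) = χ(t) for all t ∈ F_q, then the induced representation Ind_{L'}^{H(W)} χ' is irreducible with central character χ. -/
/-!
Commutators in `H(W)` are central, so a subgroup `L` containing the centre is normal and
conjugation by `g` twists a character `χ'` of `L` by `l ↦ χ ⟨g, l⟩`. For a maximal abelian `L`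
the `W`-parts of its elements form a Lagrangian subspace, so this twist is trivial only for
`g ∈ L`. Mackey's argument then makes `Ind_L χ'` irreducible: averaging a nonzero vector of an
invariant subspace over `L` against the twisted character `conjChar χ' g` leaves a multiple of
the function supported on the single coset `L g`, and the translates of these span.

For uniqueness take `L₀ = {((x, 0), t)}` and `χ₀ ((x, 0), t) = χ t`. If `ρ` is irreducible
with central character `χ`, the conjugates of the `χ₀`-isotypic projector of `ρ` by the elements
`((0, c), 0)` are the projectors of the other extensions of `χ` to `L₀`, which add up to
`q^(n+1) • id`; so that projector is nonzero, and Frobenius reciprocity yields a nonzero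
intertwiner `ρ → Ind_{L₀} χ₀`, an isomorphism by Schur's lemma. Finally `Ind_{L₀} χ₀` is the
space of functions on `L₀ \ H(W) ≅ F^n`.
-/

open Matrix

set_option linter.unusedSectionVars false

namespace Stmt1

/-- The standard symplectic form on `W = F^n × F^n`:
`⟨(x,y),(x',y')⟩ = x·y' − y·x'`. -/
def symp {F : Type} [Field F] {n : ℕ} (u v : (Fin n → F) × (Fin n → F)) : F :=
  u.1 ⬝ᵥ v.2 - u.2 ⬝ᵥ v.1

/-- The Heisenberg group `H(W) = W ⊕ F` attached to `W = F^n × F^n`, with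
product `(w,t)·(w',t') = (w + w', t + t' + ½⟨w,w'⟩)`. -/
@[ext]
structure Heis (F : Type) [Field F] (n : ℕ) where
  w : (Fin n → F) × (Fin n → F)
  t : F

namespace Heis

variable {F : Type} [Field F] {n : ℕ}

instance : Mul (Heis F n) :=
  ⟨fun a b => ⟨a.w + b.w, a.t + b.t + (2 : F)⁻¹ * symp a.w b.w⟩⟩

instance : One (Heis F n) := ⟨⟨0, 0⟩⟩

instance : Inv (Heis F n) := ⟨fun a => ⟨-a.w, -a.t⟩⟩

lemma mul_w (a b : Heis F n) : (a * b).w = a.w + b.w := rfl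
lemma mul_t (a b : Heis F n) : (a * b).t = a.t + b.t + (2 : F)⁻¹ * symp a.w b.w := rfl
lemma one_w : (1 : Heis F n).w = 0 := rfl
lemma one_t : (1 : Heis F n).t = 0 := rfl
lemma inv_w (a : Heis F n) : (a⁻¹).w = -a.w := rfl
lemma inv_t (a : Heis F n) : (a⁻¹).t = -a.t := rfl

lemma symp_self (u : (Fin n → F) × (Fin n → F)) : symp u u = 0 := by
  simp [symp, dotProduct_comm]

instance : Group (Heis F n) where
  mul_assoc a b c := by
    refine Heis.ext ?_ ?_
    · simp [mul_w, add_assoc]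
    · simp only [mul_t, mul_w, symp, Prod.fst_add, Prod.snd_add,
        add_dotProduct, dotProduct_add]
      ring
  one_mul a := by
    refine Heis.ext ?_ ?_
    · simp [mul_w, one_w]
    · simp [mul_t, one_w, one_t, symp]
  mul_one a := by
    refine Heis.ext ?_ ?_
    · simp [mul_w, one_w]
    · simp [mul_t, one_w, one_t, symp]
  inv_mul_cancel a := by
    refine Heis.ext ?_ ?_
    · simp [mul_w, inv_w, one_w]
    · have h : symp (-a.w) a.w = 0 := by
        simp only [symp, Prod.fst_neg, Prod.snd_neg, neg_dotProduct]
        rw [dotProduct_comm]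
        ring
      simp [mul_t, inv_w, inv_t, one_t, h]

end Heis

/-- A representation `ρ` of the Heisenberg group has central character `χ` if
the central element `(0,t)` acts by the scalar `χ t`. -/
def HasCentralChar {F : Type} [Field F] {n : ℕ} {V : Type} [AddCommGroup V] [Module ℂ V]
    (ρ : Representation ℂ (Heis F n) V) (χ : AddChar F ℂ) : Prop :=
  ∀ t : F, ∀ v : V, ρ ⟨0, t⟩ v = χ t • v

/-- Irreducibility of a representation: the space is nonzero, and the only
invariant subspaces are `⊥` and `⊤`. -/
def IsIrred {G : Type} [Group G] {V : Type} [AddCommGroup V] [Module ℂ V]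
    (ρ : Representation ℂ G V) : Prop :=
  (∃ v : V, v ≠ 0) ∧
    ∀ p : Submodule ℂ V, (∀ g : G, ∀ v ∈ p, ρ g v ∈ p) → p = ⊥ ∨ p = ⊤

/-- Equivalence (isomorphism) of two representations of a group `G`. -/
def RepEquiv {G V₁ V₂ : Type} [Group G] [AddCommGroup V₁] [Module ℂ V₁]
    [AddCommGroup V₂] [Module ℂ V₂]
    (ρ₁ : Representation ℂ G V₁) (ρ₂ : Representation ℂ G V₂) : Prop :=
  ∃ e : V₁ ≃ₗ[ℂ] V₂, ∀ g v, e (ρ₁ g v) = ρ₂ g (e v)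

variable {F : Type} [Field F] {n : ℕ}

/-- The space of the induced representation `Ind_{L'}^{H(W)} χ'`: functions
`f : H(W) → ℂ` with `f (l * h) = χ'(l) * f h` for `l ∈ L'`. -/
noncomputable def indSpace (L' : Subgroup (Heis F n)) (χ' : ↥L' →* ℂ) :
    Submodule ℂ (Heis F n → ℂ) where
  carrier := {f | ∀ (l : ↥L') (h : Heis F n), f (↑l * h) = χ' l * f h}
  add_mem' := by
    intro f g hf hg l h
    simp [hf l h, hg l h, mul_add]
  zero_mem' := by intro l h; simp
  smul_mem' := by
    intro c f hf l h
    simp only [Pi.smul_apply, smul_eq_mul, hf l h]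
    ring

/-- The induced representation `Ind_{L'}^{H(W)} χ'`, with `H(W)` acting by
right translation. -/
noncomputable def indRep (L' : Subgroup (Heis F n)) (χ' : ↥L' →* ℂ) :
    Representation ℂ (Heis F n) ↥(indSpace L' χ') where
  toFun g :=
    { toFun := fun f => ⟨fun h => (f : Heis F n → ℂ) (h * g), by
        intro l h
        show (f : Heis F n → ℂ) (↑l * h * g) = χ' l * (f : Heis F n → ℂ) (h * g)
        rw [mul_assoc]
        exact f.2 l (h * g)⟩
      map_add' := by
        intro f g'
        refine Subtype.ext (funext fun h => ?_)
        simp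
      map_smul' := by
        intro c f
        refine Subtype.ext (funext fun h => ?_)
        simp }
  map_one' := by
    refine LinearMap.ext fun f => Subtype.ext (funext fun h => ?_)
    simp
  map_mul' := by
    intro g₁ g₂
    refine LinearMap.ext fun f => Subtype.ext (funext fun h => ?_)
    show (f : Heis F n → ℂ) (h * (g₁ * g₂)) = (f : Heis F n → ℂ) (h * g₁ * g₂)
    rw [mul_assoc]

lemma two_ne_zero_of_odd_card [Fintype F] (hodd : Odd (Fintype.card F)) : (2 : F) ≠ 0 :=
  Ring.two_ne_zero fun h => by
    simpa [Nat.odd_iff.mp hodd] using FiniteField.even_card_iff_char_two.mp h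

lemma sum_addChar_dotProduct [Fintype F] [DecidableEq F] {χ : AddChar F ℂ} (hχ : χ ≠ 1)
    (x : Fin n → F) :
    ∑ c : Fin n → F, χ (c ⬝ᵥ x) = if x = 0 then (Fintype.card F ^ n : ℂ) else 0 := by
  split_ifs with hx
  · simp [hx]
  obtain ⟨i, hi⟩ := Function.ne_iff.mp hx
  obtain ⟨a, ha⟩ := AddChar.ne_one_iff.mp (AddChar.IsPrimitive.of_ne_one hχ hi)
  let ψ : AddChar (Fin n → F) ℂ := χ.compAddMonoidHom
    ⟨⟨fun c => c ⬝ᵥ x, zero_dotProduct x⟩, fun c d => add_dotProduct c d x⟩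
  refine AddChar.sum_eq_zero_of_ne_one (ψ := ψ) (AddChar.ne_one_iff.mpr ⟨Pi.single i a, ?_⟩)
  simpa [ψ, mul_comm] using ha

lemma mem_of_forall_commute {G : Type*} [Group G] {L : Subgroup G}
    (hab : ∀ a ∈ L, ∀ b ∈ L, a * b = b * a)
    (hmax : ∀ M : Subgroup G, (∀ a ∈ M, ∀ b ∈ M, a * b = b * a) → L ≤ M → M = L)
    {g : G} (hg : ∀ l ∈ L, g * l = l * g) : g ∈ L := by
  have hcomm : ∀ x ∈ insert g (L : Set G), ∀ y ∈ insert g (L : Set G), x * y = y * x := by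
    rintro x (rfl | hx) y (rfl | hy)
    exacts [rfl, hg y hy, (hg x hx).symm, hab x hx y hy]
  have hM := hmax (Subgroup.closure (insert g L))
    (fun a ha b hb => Set.centralizer_centralizer_comm_of_comm hcomm a
      (Subgroup.closure_le_centralizer_centralizer _ ha) b
      (Subgroup.closure_le_centralizer_centralizer _ hb))
    (fun l hl => Subgroup.subset_closure (Set.mem_insert_of_mem _ hl))
  exact hM ▸ Subgroup.subset_closure (Set.mem_insert g _)

lemma MonoidHom.sum_inv_mul_eq_zero {G : Type*} [Group G] [Fintype G] {ψ₁ ψ₂ : G →* ℂ}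
    (h : ψ₁ ≠ ψ₂) : ∑ g, (ψ₁ g)⁻¹ * ψ₂ g = 0 := by
  let φ : G →* ℂ := (Units.coeHom ℂ).comp (ψ₁.toHomUnits⁻¹ * ψ₂.toHomUnits)
  have hφ : ∀ g, φ g = (ψ₁ g)⁻¹ * ψ₂ g := fun g => by simp [φ]
  simp_rw [← hφ]
  refine sum_hom_units_eq_zero φ fun h1 => h (MonoidHom.ext fun g => ?_)
  have hg := hφ g
  rw [h1, MonoidHom.one_apply, eq_comm] at hg
  exact (inv_mul_eq_one₀ (ψ₁.toHomUnits g).ne_zero).mp hg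

def conjChar {G : Type*} [Group G] {L : Subgroup G} [L.Normal] (χ' : L →* ℂ) (g : G) :
    L →* ℂ :=
  χ'.comp (MulAut.conjNormal g).toMonoidHom

section ConjChar

variable {G : Type*} [Group G] {L : Subgroup G} [L.Normal] (χ' : L →* ℂ)

lemma conjChar_apply (g : G) (l : L) : conjChar χ' g l = χ' (MulAut.conjNormal g l) := rfl

lemma conjChar_one : conjChar χ' 1 = χ' := by
  ext l; simp [conjChar_apply]

lemma conjChar_mul (g h : G) :
    conjChar χ' (g * h) = (conjChar χ' g).comp (MulAut.conjNormal h).toMonoidHom := by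
  ext l; simp [conjChar_apply]

lemma conjChar_mul_inv_eq_self {g h : G} (hgh : conjChar χ' g = conjChar χ' h) :
    conjChar χ' (g * h⁻¹) = χ' := by
  rw [conjChar_mul, hgh, ← conjChar_mul, mul_inv_cancel, conjChar_one]

end ConjChar

section RepEquiv

variable {G V₁ V₂ V₃ : Type} [Group G] [AddCommGroup V₁] [Module ℂ V₁]
  [AddCommGroup V₂] [Module ℂ V₂] [AddCommGroup V₃] [Module ℂ V₃]
  {ρ₁ : Representation ℂ G V₁} {ρ₂ : Representation ℂ G V₂} {ρ₃ : Representation ℂ G V₃}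

lemma RepEquiv.symm (h : RepEquiv ρ₁ ρ₂) : RepEquiv ρ₂ ρ₁ := by
  obtain ⟨e, he⟩ := h
  refine ⟨e.symm, fun g v => e.injective ?_⟩
  rw [he, LinearEquiv.apply_symm_apply, LinearEquiv.apply_symm_apply]

lemma RepEquiv.trans (h₁₂ : RepEquiv ρ₁ ρ₂) (h₂₃ : RepEquiv ρ₂ ρ₃) : RepEquiv ρ₁ ρ₃ := by
  obtain ⟨e, he⟩ := h₁₂
  obtain ⟨e', he'⟩ := h₂₃
  exact ⟨e.trans e', fun g v => by simp [he, he']⟩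

lemma RepEquiv.finrank_eq (h : RepEquiv ρ₁ ρ₂) : Module.finrank ℂ V₁ = Module.finrank ℂ V₂ :=
  h.elim fun e _ => e.finrank_eq

lemma repEquiv_of_intertwiner (h₁ : IsIrred ρ₁) (h₂ : IsIrred ρ₂) (T : V₁ →ₗ[ℂ] V₂)
    (hT : ∀ g v, T (ρ₁ g v) = ρ₂ g (T v)) (hT0 : T ≠ 0) : RepEquiv ρ₁ ρ₂ := by
  have hker : LinearMap.ker T = ⊥ := by
    refine (h₁.2 _ fun g v hv => ?_).resolve_right fun htop => hT0 ?_
    · rw [LinearMap.mem_ker] at hv ⊢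
      rw [hT, hv, map_zero]
    · exact LinearMap.ker_eq_top.mp htop
  have hrange : LinearMap.range T = ⊤ := by
    refine (h₂.2 _ fun g v hv => ?_).resolve_left fun hbot => hT0 ?_
    · obtain ⟨u, rfl⟩ := hv
      exact ⟨ρ₁ g u, hT g u⟩
    · exact LinearMap.range_eq_bot.mp hbot
  exact ⟨.ofBijective T ⟨LinearMap.ker_eq_bot.mp hker, LinearMap.range_eq_top.mp hrange⟩, hT⟩

end RepEquiv

section Isotypic

variable {G V : Type*} [Group G] [AddCommGroup V] [Module ℂ V] (ρ : Representation ℂ G V)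
  (L : Subgroup G) [Fintype L] (χ' : L →* ℂ)

/-- `|L|` times the projection onto the `χ'`-isotypic part of the restriction of `ρ` to `L`. -/
noncomputable def isotypicProj : V →ₗ[ℂ] V := ∑ l : L, (χ' l)⁻¹ • ρ l

lemma isotypicProj_apply (v : V) : isotypicProj ρ L χ' v = ∑ l : L, (χ' l)⁻¹ • ρ l v := by
  simp [isotypicProj]

lemma isotypicProj_rep_apply (l : L) (v : V) :
    isotypicProj ρ L χ' (ρ l v) = χ' l • isotypicProj ρ L χ' v := by
  have hl : χ' l ≠ 0 := (χ'.toHomUnits l).ne_zero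
  rw [isotypicProj_apply, isotypicProj_apply, Finset.smul_sum]
  refine Fintype.sum_equiv (Equiv.mulRight l) _ _ fun m => ?_
  simp only [Equiv.coe_mulRight, Subgroup.coe_mul, map_mul, Module.End.mul_apply, smul_smul]
  field_simp

end Isotypic

section Symplectic

variable (u v w : (Fin n → F) × (Fin n → F))

@[simp] lemma symp_zero_left : symp 0 v = 0 := by simp [symp]

@[simp] lemma symp_zero_right : symp v 0 = 0 := by simp [symp]

lemma symp_add_left : symp (u + v) w = symp u w + symp v w := by
  simp only [symp, Prod.fst_add, Prod.snd_add, add_dotProduct]; ring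

lemma symp_smul_left (c : F) : symp (c • u) v = c * symp u v := by
  simp only [symp, Prod.smul_fst, Prod.smul_snd, smul_dotProduct, smul_eq_mul]; ring

lemma symp_smul_right (c : F) : symp u (c • v) = c * symp u v := by
  simp only [symp, Prod.smul_fst, Prod.smul_snd, dotProduct_smul, smul_eq_mul]; ring

lemma symp_neg_right : symp u (-v) = -symp u v := by
  simpa using symp_smul_right u v (-1)

lemma symp_swap : symp v u = -symp u v := by
  simp only [symp, dotProduct_comm v.1, dotProduct_comm v.2]; ring

end Symplectic

namespace Heis

lemma center_mul (c : F) (a : Heis F n) : (⟨0, c⟩ : Heis F n) * a = ⟨a.w, c + a.t⟩ :=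
  Heis.ext (zero_add _) (by simp [mul_t])

lemma mul_center (c : F) (a : Heis F n) : a * (⟨0, c⟩ : Heis F n) = ⟨a.w, a.t + c⟩ :=
  Heis.ext (add_zero _) (by simp [mul_t])

lemma center_commute (c : F) (a : Heis F n) :
    (⟨0, c⟩ : Heis F n) * a = a * ⟨0, c⟩ := by
  rw [center_mul, mul_center, add_comm]

section

variable (h2 : (2 : F) ≠ 0)
include h2

lemma mul_mul_inv (g a : Heis F n) : g * a * g⁻¹ = ⟨0, symp g.w a.w⟩ * a := by
  rw [center_mul]
  refine Heis.ext (by simp [mul_w, inv_w]) ?_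
  have half : (2 : F)⁻¹ + 2⁻¹ = 1 := by field_simp; norm_num
  simp only [mul_t, mul_w, inv_t, inv_w]
  rw [symp_add_left, symp_neg_right, symp_neg_right, symp_self, symp_swap g.w a.w]
  linear_combination symp g.w a.w * half

lemma commute_iff (a b : Heis F n) : a * b = b * a ↔ symp a.w b.w = 0 := by
  rw [← mul_inv_eq_iff_eq_mul, mul_mul_inv h2, mul_eq_right]
  exact ⟨congrArg Heis.t, fun h => Heis.ext rfl h⟩

lemma conj_of_snd_eq_zero (c x : Fin n → F) (t : F) :
    (⟨(0, c), 0⟩ : Heis F n)⁻¹ * ⟨(x, 0), t⟩ * ⟨(0, c), 0⟩ = ⟨(x, 0), t + c ⬝ᵥ x⟩ := by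
  have h := mul_mul_inv h2 (⟨(0, c), 0⟩ : Heis F n)⁻¹ ⟨(x, 0), t⟩
  rw [inv_inv] at h
  rw [h, center_mul]
  simp [symp, inv_w, add_comm]

end

lemma mk_fst_mul_mk_snd (h : Heis F n) :
    (⟨(h.w.1, 0), h.t - 2⁻¹ * (h.w.1 ⬝ᵥ h.w.2)⟩ : Heis F n) * ⟨(0, h.w.2), 0⟩ = h :=
  Heis.ext (by simp [mul_w]) (by simp [mul_t, symp])

noncomputable instance [Fintype F] : Fintype (Heis F n) :=
  Fintype.ofEquiv (((Fin n → F) × (Fin n → F)) × F)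
    ⟨fun p => ⟨p.1, p.2⟩, fun h => (h.w, h.t), fun _ => rfl, fun _ => rfl⟩

end Heis

section Induced

variable {L : Subgroup (Heis F n)} {χ' : L →* ℂ}

variable (L χ') in
open Classical in
noncomputable def indDelta (g : Heis F n) : indSpace L χ' :=
  ⟨fun x => if h : x * g⁻¹ ∈ L then χ' ⟨x * g⁻¹, h⟩ else 0, by
    intro l x
    have hmem : (l : Heis F n) * x * g⁻¹ ∈ L ↔ x * g⁻¹ ∈ L := by
      rw [mul_assoc, Subgroup.mul_mem_cancel_left L l.2]
    by_cases hx : x * g⁻¹ ∈ L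
    · simp only [dif_pos hx, dif_pos (hmem.mpr hx), ← map_mul]
      exact congrArg χ' (Subtype.ext (mul_assoc _ _ _))
    · simp only [dif_neg hx, dif_neg (mt hmem.mp hx), mul_zero]⟩

lemma indDelta_apply_of_mem {g x : Heis F n} (hx : x * g⁻¹ ∈ L) :
    (indDelta L χ' g : Heis F n → ℂ) x = χ' ⟨x * g⁻¹, hx⟩ := dif_pos hx

lemma indDelta_apply_of_not_mem {g x : Heis F n} (hx : x * g⁻¹ ∉ L) :
    (indDelta L χ' g : Heis F n → ℂ) x = 0 := dif_neg hx

lemma indDelta_one_ne_zero : indDelta L χ' 1 ≠ 0 := fun h => by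
  have h1 := congrFun (congrArg Subtype.val h) 1
  have hmem : (1 : Heis F n) * 1⁻¹ ∈ L := by simp [L.one_mem]
  rw [indDelta_apply_of_mem hmem, show (⟨_, hmem⟩ : L) = 1 from Subtype.ext (by simp),
    map_one] at h1
  exact one_ne_zero h1

lemma indRep_indDelta (g h : Heis F n) :
    indRep L χ' g (indDelta L χ' h) = indDelta L χ' (h * g⁻¹) := by
  refine Subtype.ext (funext fun x => ?_)
  show (indDelta L χ' h : Heis F n → ℂ) (x * g) = _
  have hx : x * (h * g⁻¹)⁻¹ = x * g * h⁻¹ := by group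
  by_cases hmem : x * g * h⁻¹ ∈ L
  · rw [indDelta_apply_of_mem hmem, indDelta_apply_of_mem (hx ▸ hmem)]
    simp only [hx]
  · rw [indDelta_apply_of_not_mem hmem, indDelta_apply_of_not_mem (hx ▸ hmem)]

lemma eq_smul_indDelta {f : indSpace L χ'} {g : Heis F n}
    (hf : ∀ x, x * g⁻¹ ∉ L → (f : Heis F n → ℂ) x = 0) :
    f = (f : Heis F n → ℂ) g • indDelta L χ' g := by
  refine Subtype.ext (funext fun x => ?_)
  show (f : Heis F n → ℂ) x = (f : Heis F n → ℂ) g * (indDelta L χ' g : Heis F n → ℂ) x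
  by_cases hx : x * g⁻¹ ∈ L
  · rw [indDelta_apply_of_mem hx, mul_comm, ← f.2 ⟨_, hx⟩ g, inv_mul_cancel_right]
  · rw [indDelta_apply_of_not_mem hx, mul_zero, hf x hx]

variable [Fintype F]

open Classical in
lemma sum_smul_indDelta (f : indSpace L χ') :
    ∑ g, (f : Heis F n → ℂ) g • indDelta L χ' g = (Fintype.card L : ℂ) • f := by
  refine Subtype.ext (funext fun x => ?_)
  simp only [AddSubmonoidClass.coe_finsetSum, Finset.sum_apply, SetLike.val_smul,
    Pi.smul_apply, smul_eq_mul]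
  have hterm : ∀ g, (f : Heis F n → ℂ) g * (indDelta L χ' g : Heis F n → ℂ) x
      = if x * g⁻¹ ∈ L then (f : Heis F n → ℂ) x else 0 := fun g => by
    split_ifs with hx
    · rw [indDelta_apply_of_mem hx, mul_comm, ← f.2 ⟨_, hx⟩ g, inv_mul_cancel_right]
    · rw [indDelta_apply_of_not_mem hx, mul_zero]
  simp only [hterm]
  rw [Fintype.sum_equiv ((Equiv.inv _).trans (Equiv.mulLeft x))
    (fun g => if x * g⁻¹ ∈ L then (f : Heis F n → ℂ) x else 0)
    (fun m => if m ∈ L then (f : Heis F n → ℂ) x else 0) (fun g => rfl),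
    ← Finset.sum_filter, Finset.sum_const, nsmul_eq_mul, Fintype.card_subtype]

variable [L.Normal]

lemma indSpace_apply_mul_of_normal (f : indSpace L χ') (x : Heis F n) (l : L) :
    (f : Heis F n → ℂ) (x * l) = conjChar χ' x l * (f : Heis F n → ℂ) x := by
  rw [conjChar_apply, ← f.2, MulAut.conjNormal_apply, inv_mul_cancel_right]

open Classical in
/-- On the coset `L x` the average is `f x` times the pairing of the characters
`conjChar χ' g` and `conjChar χ' x` of `L`, which differ unless `x ∈ L g`. -/
lemma sum_smul_indRep_eq_smul_indDelta
    (hstab : ∀ g, conjChar χ' g = χ' → g ∈ L) (f : indSpace L χ') (g : Heis F n) :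
    ∑ l : L, (conjChar χ' g l)⁻¹ • indRep L χ' l f
      = ((Fintype.card L : ℂ) * (f : Heis F n → ℂ) g) • indDelta L χ' g := by
  set E := ∑ l : L, (conjChar χ' g l)⁻¹ • indRep L χ' l f
  have hE : ∀ x, (E : Heis F n → ℂ) x
      = (∑ l : L, (conjChar χ' g l)⁻¹ * conjChar χ' x l) * (f : Heis F n → ℂ) x := by
    intro x
    simp only [E, AddSubmonoidClass.coe_finsetSum, Finset.sum_apply, SetLike.val_smul,
      Pi.smul_apply, smul_eq_mul, Finset.sum_mul, mul_assoc]
    exact Finset.sum_congr rfl fun l _ => congrArg _ (indSpace_apply_mul_of_normal f x l)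
  have hEg : (E : Heis F n → ℂ) g = (Fintype.card L : ℂ) * (f : Heis F n → ℂ) g := by
    rw [hE]
    congr 1
    refine (Finset.sum_congr rfl fun l _ => inv_mul_cancel₀ ?_).trans (by simp)
    exact ((conjChar χ' g).toHomUnits l).ne_zero
  rw [← hEg]
  refine eq_smul_indDelta fun x hx => ?_
  rw [hE, MonoidHom.sum_inv_mul_eq_zero, zero_mul]
  exact fun hgx => hx (hstab _ (conjChar_mul_inv_eq_self χ' hgx.symm))

theorem isIrred_indRep_of_normal (hstab : ∀ g, conjChar χ' g = χ' → g ∈ L) :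
    IsIrred (indRep L χ') := by
  classical
  refine ⟨⟨_, indDelta_one_ne_zero⟩, fun p hp => or_iff_not_imp_left.mpr fun hp0 => ?_⟩
  obtain ⟨f, hfp, hf0⟩ := (Submodule.ne_bot_iff p).mp hp0
  obtain ⟨g₀, hg₀⟩ : ∃ g₀, (f : Heis F n → ℂ) g₀ ≠ 0 := by
    by_contra! h
    exact hf0 (Subtype.ext (funext h))
  have hcard : (Fintype.card L : ℂ) ≠ 0 := Nat.cast_ne_zero.mpr Fintype.card_ne_zero
  have hδ₀ : indDelta L χ' g₀ ∈ p := by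
    rw [← inv_smul_smul₀ (mul_ne_zero hcard hg₀) (indDelta L χ' g₀),
      ← sum_smul_indRep_eq_smul_indDelta hstab f g₀]
    exact p.smul_mem _ (p.sum_mem fun l _ => p.smul_mem _ (hp l f hfp))
  have hδ : ∀ g, indDelta L χ' g ∈ p := fun g => by
    simpa [indRep_indDelta] using hp (g⁻¹ * g₀) _ hδ₀
  refine Submodule.eq_top_iff'.mpr fun φ => ?_
  rw [← inv_smul_smul₀ hcard φ, ← sum_smul_indDelta]
  exact p.smul_mem _ (p.sum_mem fun g _ => p.smul_mem _ (hδ g))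

end Induced

section MaximalAbelian

variable (h2 : (2 : F) ≠ 0) {L : Subgroup (Heis F n)}
include h2

lemma normal_of_center_le (hZ : ∀ t : F, (⟨0, t⟩ : Heis F n) ∈ L) : L.Normal where
  conj_mem a ha g := by
    rw [Heis.mul_mul_inv h2]
    exact mul_mem (hZ _) ha

lemma conjChar_apply_eq_mul [L.Normal] (hZ : ∀ t : F, (⟨0, t⟩ : Heis F n) ∈ L)
    {χ : AddChar F ℂ} {χ' : L →* ℂ} (hext : ∀ t : F, χ' ⟨⟨0, t⟩, hZ t⟩ = χ t)
    (g : Heis F n) (l : L) : conjChar χ' g l = χ (symp g.w (l : Heis F n).w) * χ' l := by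
  have hconj : MulAut.conjNormal g l = ⟨⟨0, symp g.w (l : Heis F n).w⟩, hZ _⟩ * l :=
    Subtype.ext (by rw [MulAut.conjNormal_apply, Heis.mul_mul_inv h2]; rfl)
  rw [conjChar_apply, hconj, map_mul, hext]

variable (hab : ∀ a ∈ L, ∀ b ∈ L, a * b = b * a)
include hab

lemma symp_eq_zero_of_mem {a b : Heis F n} (ha : a ∈ L) (hb : b ∈ L) : symp a.w b.w = 0 :=
  (Heis.commute_iff h2 a b).mp (hab a ha b hb)

variable (hmax : ∀ M : Subgroup (Heis F n), (∀ a ∈ M, ∀ b ∈ M, a * b = b * a) → L ≤ M → M = L)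
include hmax

lemma mem_of_forall_symp_eq_zero {g : Heis F n} (hg : ∀ l ∈ L, symp g.w l.w = 0) : g ∈ L :=
  mem_of_forall_commute hab hmax fun l hl => (Heis.commute_iff h2 g l).mpr (hg l hl)

/-- The `W`-parts of a maximal abelian `L` are closed under scaling, so a nonzero value of
`symp g.w` on `L` can be scaled to one where `χ ≠ 1`. -/
lemma symp_eq_zero_of_forall_char_eq_one {χ : AddChar F ℂ} (hχ : χ ≠ 1) {g : Heis F n}
    (hg : ∀ l ∈ L, χ (symp g.w l.w) = 1) {l : Heis F n} (hl : l ∈ L) : symp g.w l.w = 0 := by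
  by_contra hs
  obtain ⟨c, hc⟩ := AddChar.ne_one_iff.mp (AddChar.IsPrimitive.of_ne_one hχ hs)
  have hcl : (⟨c • l.w, 0⟩ : Heis F n) ∈ L :=
    mem_of_forall_symp_eq_zero h2 hab hmax fun m hm => by
      rw [symp_smul_left, symp_eq_zero_of_mem h2 hab hl hm, mul_zero]
  refine hc ?_
  simpa [symp_smul_right, mul_comm] using hg _ hcl

theorem isIrred_indRep_of_maximal [Fintype F] {χ : AddChar F ℂ} (hχ : χ ≠ 1)
    (hZ : ∀ t : F, (⟨0, t⟩ : Heis F n) ∈ L) {χ' : L →* ℂ}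
    (hext : ∀ t : F, χ' ⟨⟨0, t⟩, hZ t⟩ = χ t) : IsIrred (indRep L χ') := by
  have := normal_of_center_le h2 hZ
  refine isIrred_indRep_of_normal fun g hg => mem_of_forall_symp_eq_zero h2 hab hmax fun l hl =>
    symp_eq_zero_of_forall_char_eq_one h2 hab hmax hχ (fun m hm => ?_) hl
  have hm' := DFunLike.congr_fun hg ⟨m, hm⟩
  rw [conjChar_apply_eq_mul h2 hZ hext] at hm'
  exact (mul_eq_right₀ ((χ'.toHomUnits ⟨m, hm⟩).ne_zero)).mp hm'

end MaximalAbelian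

lemma hasCentralChar_indRep {L : Subgroup (Heis F n)} (hZ : ∀ t : F, (⟨0, t⟩ : Heis F n) ∈ L)
    {χ : AddChar F ℂ} {χ' : L →* ℂ} (hext : ∀ t : F, χ' ⟨⟨0, t⟩, hZ t⟩ = χ t) :
    HasCentralChar (indRep L χ') χ := fun t f => by
  refine Subtype.ext (funext fun x => ?_)
  show (f : Heis F n → ℂ) (x * ⟨0, t⟩) = χ t * (f : Heis F n → ℂ) x
  rw [← Heis.center_commute, f.2 ⟨_, hZ t⟩, hext]

section Frobenius

variable {V : Type} [AddCommGroup V] [Module ℂ V] (ρ : Representation ℂ (Heis F n) V)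
  (L : Subgroup (Heis F n)) [Fintype L] (χ' : L →* ℂ)

/-- Frobenius reciprocity, applied to the `(L, χ')`-eigenfunctional `μ ∘ isotypicProj ρ L χ'`. -/
noncomputable def toIndRep (μ : V →ₗ[ℂ] ℂ) : V →ₗ[ℂ] indSpace L χ' :=
  (LinearMap.pi fun h => μ ∘ₗ isotypicProj ρ L χ' ∘ₗ ρ h).codRestrict _ fun v l h => by
    simp [map_mul, isotypicProj_rep_apply]

lemma toIndRep_apply (μ : V →ₗ[ℂ] ℂ) (v : V) (h : Heis F n) :
    (toIndRep ρ L χ' μ v : Heis F n → ℂ) h = μ (isotypicProj ρ L χ' (ρ h v)) := rfl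

lemma toIndRep_intertwines (μ : V →ₗ[ℂ] ℂ) (g : Heis F n) (v : V) :
    toIndRep ρ L χ' μ (ρ g v) = indRep L χ' g (toIndRep ρ L χ' μ v) :=
  Subtype.ext (funext fun h => by
    show _ = (toIndRep ρ L χ' μ v : Heis F n → ℂ) (h * g)
    rw [toIndRep_apply, toIndRep_apply, map_mul, Module.End.mul_apply])

variable {ρ L χ'}

theorem repEquiv_indRep_of_isotypicProj_ne_zero (hρ : IsIrred ρ) (hind : IsIrred (indRep L χ'))
    (hP : isotypicProj ρ L χ' ≠ 0) : RepEquiv ρ (indRep L χ') := by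
  obtain ⟨v, hv⟩ : ∃ v, isotypicProj ρ L χ' v ≠ 0 := by
    by_contra! h
    exact hP (LinearMap.ext h)
  obtain ⟨μ, hμ⟩ : ∃ μ : Module.Dual ℂ V, μ (isotypicProj ρ L χ' v) ≠ 0 := by
    by_contra! h
    exact hv ((Module.forall_dual_apply_eq_zero_iff ℂ _).mp h)
  refine repEquiv_of_intertwiner hρ hind (toIndRep ρ L χ' μ) (toIndRep_intertwines ρ L χ' μ)
    fun hT => hμ ?_
  simpa [toIndRep_apply] using congrFun (congrArg Subtype.val (LinearMap.congr_fun hT v)) 1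

end Frobenius

section Lagrangian

variable (F n) in
def lagrangian : Subgroup (Heis F n) where
  carrier := {h | h.w.2 = 0}
  mul_mem' {a b} ha hb := by simp_all [Heis.mul_w]
  one_mem' := rfl
  inv_mem' {a} ha := by simp_all [Heis.inv_w]

lemma mem_lagrangian {h : Heis F n} : h ∈ lagrangian F n ↔ h.w.2 = 0 := Iff.rfl

lemma symp_eq_zero_of_mem_lagrangian {a b : Heis F n} (ha : a ∈ lagrangian F n)
    (hb : b ∈ lagrangian F n) : symp a.w b.w = 0 := by
  simp [symp, mem_lagrangian.mp ha, mem_lagrangian.mp hb]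

def lagrangianChar (χ : AddChar F ℂ) : lagrangian F n →* ℂ where
  toFun l := χ (l : Heis F n).t
  map_one' := AddChar.map_zero_eq_one χ
  map_mul' a b := by
    simp [Heis.mul_t, symp_eq_zero_of_mem_lagrangian a.2 b.2, AddChar.map_add_eq_mul]

lemma lagrangianChar_apply (χ : AddChar F ℂ) (l : lagrangian F n) :
    lagrangianChar χ l = χ (l : Heis F n).t := rfl

lemma lagrangian_abelian : ∀ a ∈ lagrangian F n, ∀ b ∈ lagrangian F n, a * b = b * a :=
  fun a ha b hb => Heis.ext (add_comm _ _) (by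
    simp [Heis.mul_t, symp_eq_zero_of_mem_lagrangian ha hb,
      symp_eq_zero_of_mem_lagrangian hb ha, add_comm])

lemma lagrangian_maximal (h2 : (2 : F) ≠ 0) (M : Subgroup (Heis F n))
    (hM : ∀ a ∈ M, ∀ b ∈ M, a * b = b * a) (hle : lagrangian F n ≤ M) : M = lagrangian F n := by
  refine le_antisymm (fun m hm => funext fun i => ?_) hle
  have hcomm := (Heis.commute_iff h2 _ _).mp
    (hM m hm ⟨(Pi.single i 1, 0), 0⟩ (hle (mem_lagrangian.mpr rfl)))
  simpa [symp] using hcomm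

noncomputable def indLagrangianEquiv (χ : AddChar F ℂ) :
    indSpace (lagrangian F n) (lagrangianChar χ) ≃ₗ[ℂ] ((Fin n → F) → ℂ) where
  toFun f y := (f : Heis F n → ℂ) ⟨(0, y), 0⟩
  map_add' _ _ := rfl
  map_smul' _ _ := rfl
  invFun φ := ⟨fun h => χ (h.t - 2⁻¹ * (h.w.1 ⬝ᵥ h.w.2)) * φ h.w.2, fun l h => by
    obtain ⟨⟨⟨x, y⟩, s⟩, hy⟩ := l
    obtain rfl : y = 0 := hy
    simp only [lagrangianChar_apply, Heis.mul_t, Heis.mul_w, Prod.fst_add, Prod.snd_add,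
      zero_add, ← mul_assoc, ← AddChar.map_add_eq_mul]
    congr 2
    simp only [symp, add_dotProduct, zero_dotProduct]
    ring⟩
  left_inv f := Subtype.ext (funext fun h => by
    conv_rhs => rw [← Heis.mk_fst_mul_mk_snd h, f.2 ⟨_, rfl⟩]
    rfl)
  right_inv φ := funext fun y => by simp

lemma finrank_indSpace_lagrangian [Fintype F] (χ : AddChar F ℂ) :
    Module.finrank ℂ (indSpace (lagrangian F n) (lagrangianChar χ)) = Fintype.card F ^ n := by
  simp [(indLagrangianEquiv χ).finrank_eq]

variable [Fintype F] {V : Type} [AddCommGroup V] [Module ℂ V] {ρ : Representation ℂ (Heis F n) V}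
  {χ : AddChar F ℂ}

open Classical in
lemma isotypicProj_lagrangian_apply (v : V) :
    isotypicProj ρ (lagrangian F n) (lagrangianChar χ) v
      = ∑ x : Fin n → F, ∑ t : F, χ (-t) • ρ ⟨(x, 0), t⟩ v := by
  let e : (Fin n → F) × F ≃ lagrangian F n :=
    ⟨fun p => ⟨⟨(p.1, 0), p.2⟩, rfl⟩, fun l => ((l : Heis F n).w.1, (l : Heis F n).t),
      fun _ => rfl, fun l => Subtype.ext (Heis.ext (Prod.ext rfl l.2.symm) rfl)⟩
  rw [isotypicProj_apply, ← e.sum_comp, Fintype.sum_prod_type]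
  simp [e, lagrangianChar_apply, AddChar.map_neg_eq_inv]

open Classical in
/-- The conjugate by `((0, c), 0)` is the isotypic projection for the extension
`((x, 0), t) ↦ χ (t + c ⬝ᵥ x)` of `χ`, and these projections add up to a multiple of the
identity. -/
lemma sum_conj_isotypicProj_lagrangian (h2 : (2 : F) ≠ 0) (hχ : χ ≠ 1)
    (hcc : HasCentralChar ρ χ) (v : V) :
    ∑ c : Fin n → F, ρ (⟨(0, c), 0⟩)⁻¹
        (isotypicProj ρ (lagrangian F n) (lagrangianChar χ) (ρ ⟨(0, c), 0⟩ v))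
      = (Fintype.card F ^ (n + 1) : ℂ) • v := by
  have hconj : ∀ c x t, ρ (⟨(0, c), 0⟩)⁻¹ (ρ ⟨(x, 0), t⟩ (ρ ⟨(0, c), 0⟩ v))
      = ρ ⟨(x, 0), t + c ⬝ᵥ x⟩ v := fun c x t => by
    rw [← Module.End.mul_apply, ← Module.End.mul_apply, ← map_mul, ← map_mul,
      Heis.conj_of_snd_eq_zero h2]
  have hshift : ∀ x s, ∑ t, χ (-t) • ρ ⟨(x, 0), t + s⟩ v
      = χ s • ∑ t, χ (-t) • ρ ⟨(x, 0), t⟩ v := fun x s => by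
    rw [Finset.smul_sum]
    refine Fintype.sum_equiv (Equiv.addRight s) _ _ fun t => ?_
    simp [smul_smul, ← AddChar.map_add_eq_mul]
  have hcenter : ∑ t, χ (-t) • ρ ⟨(0, 0), t⟩ v = (Fintype.card F : ℂ) • v := by
    have hterm : ∀ t, χ (-t) • ρ ⟨(0, 0), t⟩ v = v := fun t => by
      rw [← Prod.zero_eq_mk, hcc, smul_smul, ← AddChar.map_add_eq_mul, neg_add_cancel,
        AddChar.map_zero_eq_one, one_smul]
    simp [hterm, ← Nat.cast_smul_eq_nsmul ℂ]
  calc _ = ∑ c : Fin n → F, ∑ x, ∑ t, χ (-t) • ρ ⟨(x, 0), t + c ⬝ᵥ x⟩ v := by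
        simp [isotypicProj_lagrangian_apply, map_sum, hconj]
    _ = ∑ x, (∑ c : Fin n → F, χ (c ⬝ᵥ x)) • ∑ t, χ (-t) • ρ ⟨(x, 0), t⟩ v := by
        rw [Finset.sum_comm]
        simp [hshift, Finset.sum_smul]
    _ = (Fintype.card F ^ n : ℂ) • ∑ t, χ (-t) • ρ ⟨(0, 0), t⟩ v := by
        simp [sum_addChar_dotProduct hχ]
    _ = _ := by rw [hcenter, smul_smul, pow_succ]

open Classical in
lemma isotypicProj_lagrangian_ne_zero (h2 : (2 : F) ≠ 0) (hχ : χ ≠ 1)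
    (hcc : HasCentralChar ρ χ) {v : V} (hv : v ≠ 0) :
    isotypicProj ρ (lagrangian F n) (lagrangianChar χ) ≠ 0 := fun hP => by
  have h := sum_conj_isotypicProj_lagrangian h2 hχ hcc v
  simp only [hP, LinearMap.zero_apply, map_zero, Finset.sum_const_zero] at h
  exact hv ((smul_eq_zero.mp h.symm).resolve_left (by simp))

open Classical in
theorem repEquiv_indRep_lagrangian (hodd : Odd (Fintype.card F)) (hχ : χ ≠ 1) (hρ : IsIrred ρ)
    (hcc : HasCentralChar ρ χ) : RepEquiv ρ (indRep (lagrangian F n) (lagrangianChar χ)) :=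
  have h2 := two_ne_zero_of_odd_card hodd
  repEquiv_indRep_of_isotypicProj_ne_zero hρ
    (isIrred_indRep_of_maximal h2 lagrangian_abelian (lagrangian_maximal h2) hχ
      (fun _ => rfl) (fun _ => rfl))
    (isotypicProj_lagrangian_ne_zero h2 hχ hcc hρ.1.choose_spec)

end Lagrangian

/-- Theorem 5.1.2, Stone–von Neumann–Mackey. -/
theorem stone_vonNeumann_mackey
    (F : Type) [Field F] [Fintype F] (hodd : Odd (Fintype.card F))
    (n : ℕ) (χ : AddChar F ℂ) (hχ : χ ≠ 1) :
    -- (1) uniqueness up to equivalence, and the dimension is q^n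
    (∀ (V₁ : Type) [AddCommGroup V₁] [Module ℂ V₁] [FiniteDimensional ℂ V₁]
      (V₂ : Type) [AddCommGroup V₂] [Module ℂ V₂] [FiniteDimensional ℂ V₂]
      (ρ₁ : Representation ℂ (Heis F n) V₁) (ρ₂ : Representation ℂ (Heis F n) V₂),
      IsIrred ρ₁ → IsIrred ρ₂ → HasCentralChar ρ₁ χ → HasCentralChar ρ₂ χ →
        RepEquiv ρ₁ ρ₂ ∧ Module.finrank ℂ V₁ = Fintype.card F ^ n) ∧
    -- (2) irreducibility of the induced representation from a maximal abelian
    -- subgroup L' containing the center, for any extension χ' of χ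
    (∀ L' : Subgroup (Heis F n),
      (∀ a ∈ L', ∀ b ∈ L', a * b = b * a) →
      (∀ M : Subgroup (Heis F n), (∀ a ∈ M, ∀ b ∈ M, a * b = b * a) → L' ≤ M → M = L') →
      ∀ (hZ : ∀ t : F, (⟨0, t⟩ : Heis F n) ∈ L') (χ' : ↥L' →* ℂ),
        (∀ t : F, χ' ⟨⟨0, t⟩, hZ t⟩ = χ t) →
        IsIrred (indRep L' χ') ∧ HasCentralChar (indRep L' χ') χ) := by
  have h2 := two_ne_zero_of_odd_card hodd
  refine ⟨fun V₁ _ _ _ V₂ _ _ _ ρ₁ ρ₂ hρ₁ hρ₂ hcc₁ hcc₂ => ?_,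
    fun L hab hmax hZ χ' hext =>
      ⟨isIrred_indRep_of_maximal h2 hab hmax hχ hZ hext, hasCentralChar_indRep hZ hext⟩⟩
  have e₁ := repEquiv_indRep_lagrangian hodd hχ hρ₁ hcc₁
  have e₂ := repEquiv_indRep_lagrangian hodd hχ hρ₂ hcc₂
  exact ⟨e₁.trans e₂.symm, e₁.finrank_eq.trans (finrank_indSpace_lagrangian χ)⟩

end Stmt1
end

section
/- Let π be a finite-dimensional complex representation of GL_n(F_q) of U-rank k with k < (n−1)/2, and let m ≤ n satisfy k < (m−1)/2. Embed GL_m(F_q) in GL_n(F_q) as the top-left m×m block, extended by the identity matrix. Then the restriction of π to GL_m(F_q) has U-rank k (as a representation of GL_m(F_q)). -/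
/-!
An embedding `e : α ⊕ β ↪ ι` gives a copy of `U_{a,b}` in `GL_ι` with rows at `e ∘ inl` and
columns at `e ∘ inr`. Conjugation by a permutation matrix moves such a position to any other of
the same shape, so which characters `γ_T` occur in `π` does not depend on the position. A position
of shape `(a', b')` with `a' ≤ a`, `b' ≤ b` lies inside one of shape `(a, b)`, and on it `γ_T`
restricts to `γ` of a submatrix of `T`. Conversely, every character occurring on the smaller block
extends to one occurring on the bigger block: take a common eigenvector of the commuting operators
`π(u)` inside the isotypic component of the smaller block. Since `T ↦ γ_T` is a bijection, that
extension is some `γ_T`.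

So the characters of `U_{⌊m/2⌋,⌈m/2⌉} ⊂ GL_m` occurring in `π` are the `γ_S` with `S` a
`⌈m/2⌉ × ⌊m/2⌋` submatrix of some `T` occurring for `U_{⌊n/2⌋,⌈n/2⌉}`. Their ranks are at most
`k`, and `k` is attained because a matrix of rank `k ≤ ⌊m/2⌋` has a `⌈m/2⌉ × ⌊m/2⌋` submatrix of
the same rank.
-/

open Matrix
open scoped MatrixGroups

set_option linter.unusedSectionVars false

namespace Stmt8

variable {F : Type} [Field F] [Fintype F] [DecidableEq F]

/-- The `n × n` matrix with the `a × b` matrix `X` placed in the block occupying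
rows `0,…,a-1` and columns `n-b,…,n-1`, and `0` elsewhere. -/
def blockEmbed (n a b : ℕ) (X : Matrix (Fin a) (Fin b) F) : Matrix (Fin n) (Fin n) F :=
  Matrix.of fun i j =>
    if hi : (i : ℕ) < a then
      if hj : n - b ≤ (j : ℕ) ∧ (j : ℕ) - (n - b) < b then
        X ⟨i, hi⟩ ⟨(j : ℕ) - (n - b), hj.2⟩
      else 0
    else 0

lemma blockEmbed_mul_blockEmbed {n a b : ℕ} (hab : a + b ≤ n)
    (X Y : Matrix (Fin a) (Fin b) F) :
    blockEmbed n a b X * blockEmbed n a b Y = 0 := by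
  ext i j
  rw [Matrix.mul_apply, Matrix.zero_apply]
  apply Finset.sum_eq_zero
  intro k _
  rcases Nat.lt_or_ge (k : ℕ) a with hk | hk
  · have h2 : ¬ (n - b ≤ (k : ℕ) ∧ (k : ℕ) - (n - b) < b) := by
      rintro ⟨h, -⟩; omega
    have hz : blockEmbed n a b X i k = 0 := by
      unfold blockEmbed
      by_cases hi : (i : ℕ) < a
      · rw [Matrix.of_apply, dif_pos hi, dif_neg h2]
      · rw [Matrix.of_apply, dif_neg hi]
    rw [hz, zero_mul]
  · have hz : blockEmbed n a b Y k j = 0 := by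
      unfold blockEmbed
      rw [Matrix.of_apply, dif_neg (Nat.not_lt.2 hk)]
    rw [hz, mul_zero]

/-- The element `I_n + blockEmbed X` of `GL_n(F)`; for `a + b ≤ n` these elements
form the abelian subgroup `U_{a,b}` (identified with `(M_{a,b}(F), +)`). -/
def uU (n a b : ℕ) (hab : a + b ≤ n) (X : Matrix (Fin a) (Fin b) F) : GL (Fin n) F where
  val := 1 + blockEmbed n a b X
  inv := 1 - blockEmbed n a b X
  val_inv := by
    have h := blockEmbed_mul_blockEmbed hab X X
    have e : (1 + blockEmbed n a b X) * (1 - blockEmbed n a b X)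
        = 1 - blockEmbed n a b X * blockEmbed n a b X := by noncomm_ring
    rw [e, h, sub_zero]
  inv_val := by
    have h := blockEmbed_mul_blockEmbed hab X X
    have e : (1 - blockEmbed n a b X) * (1 + blockEmbed n a b X)
        = 1 - blockEmbed n a b X * blockEmbed n a b X := by noncomm_ring
    rw [e, h, sub_zero]

variable {V : Type} [AddCommGroup V] [Module ℂ V]

/-- The character `γ_T` of `U_{a,b} ≅ M_{a,b}(F_q)`, `γ_T(X) = χ₀(trace (T*X))`,
appears in (the restriction to `U_{a,b}` of) the representation `π`, i.e. its
eigenspace is nonzero. -/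
def CharAppears (χ₀ : AddChar F ℂ) {n : ℕ} (π : Representation ℂ (GL (Fin n) F) V)
    {a b : ℕ} (hab : a + b ≤ n) (T : Matrix (Fin b) (Fin a) F) : Prop :=
  ∃ v : V, v ≠ 0 ∧ ∀ X : Matrix (Fin a) (Fin b) F,
    π (uU n a b hab X) v = χ₀ ((T * X).trace) • v

/-- `rank_{a,b}(π) = k` : the maximal rank of a character of `U_{a,b}`
appearing in `π|U_{a,b}` is `k`.  (The rank of `γ_T` is `rank T`.) -/
def HasRankAB (χ₀ : AddChar F ℂ) {n : ℕ} (π : Representation ℂ (GL (Fin n) F) V)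
    {a b : ℕ} (hab : a + b ≤ n) (k : ℕ) : Prop :=
  (∃ T, CharAppears χ₀ π hab T ∧ T.rank = k) ∧
  (∀ T, CharAppears χ₀ π hab T → T.rank ≤ k)


/-- The `U`-rank of a representation `π` of `GL_n(F_q)` equals `k`:
this is `rank_{⌊n/2⌋,⌈n/2⌉}(π) = k`. -/
def HasURank (χ₀ : AddChar F ℂ) {n : ℕ} (π : Representation ℂ (GL (Fin n) F) V) (k : ℕ) : Prop :=
  HasRankAB χ₀ π (show n / 2 + (n - n / 2) ≤ n by omega) k

/-- The multiplicative embedding `A ↦ fromBlocks A 0 0 1` of `m × m` matrices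
into `(Fin m ⊕ Fin r) × (Fin m ⊕ Fin r)` matrices. -/
def blockDiagHom (m r : ℕ) : Matrix (Fin m) (Fin m) F →* Matrix (Fin m ⊕ Fin r) (Fin m ⊕ Fin r) F where
  toFun A := Matrix.fromBlocks A 0 0 1
  map_one' := Matrix.fromBlocks_one
  map_mul' := by
    intro A B
    rw [Matrix.fromBlocks_multiply]
    simp

/-- The standard embedding `GL_m(F) → GL_n(F)`, `A ↦ diag(A, I_{n-m})`
(top-left `m × m` block, extended by the identity matrix). -/
def glEmbed {m n : ℕ} (h : m ≤ n) : GL (Fin m) F →* GL (Fin n) F :=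
  Units.map
    (((Matrix.reindexAlgEquiv F F
        ((finSumFinEquiv (m := m) (n := n - m)).trans (finCongr (by omega)))).toRingEquiv.toMonoidHom).comp
      (blockDiagHom m (n - m)))

end Stmt8

namespace Matrix

variable {R : Type*} [CommRing R] {l m n ι κ ι' κ' α β α₂ β₂ : Type*}

theorem mul_submatrix_id_one [Fintype n] [DecidableEq n] (M : Matrix m n R) (f : l → n) :
    M * (1 : Matrix n n R).submatrix id f = M.submatrix id f := by
  simpa using mul_submatrix_one (Equiv.refl n) f M

theorem submatrix_one_id_mul [Fintype m] [DecidableEq m] (f : l → m) (M : Matrix m n R) :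
    (1 : Matrix m m R).submatrix f id * M = M.submatrix f id := by
  simpa using one_submatrix_mul f (Equiv.refl m) M

/-- The matrix with `X i j` at position `(r i, c j)`, entries sent to a common position being
added. -/
def place [Fintype α] [Fintype β] [DecidableEq ι] [DecidableEq κ] (r : α → ι) (c : β → κ) :
    Matrix α β R →+ Matrix ι κ R where
  toFun X := (1 : Matrix ι ι R).submatrix id r * X * (1 : Matrix κ κ R).submatrix c id
  map_zero' := by simp
  map_add' X Y := by simp [Matrix.mul_add, Matrix.add_mul]

section Place

variable [Fintype α] [Fintype β] [DecidableEq ι] [DecidableEq κ]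

lemma place_apply (r : α → ι) (c : β → κ) (X : Matrix α β R) :
    place r c X = (1 : Matrix ι ι R).submatrix id r * X * (1 : Matrix κ κ R).submatrix c id :=
  rfl

lemma place_apply_apply {r : α → ι} {c : β → κ} (hr : r.Injective) (hc : c.Injective)
    (X : Matrix α β R) (i : α) (j : β) : place r c X (r i) (c j) = X i j := by
  classical
  simp [place_apply, mul_apply, one_apply, hr.eq_iff, hc.eq_iff]

lemma place_apply_of_forall_ne_left {r : α → ι} (c : β → κ) {p : ι} (hp : ∀ i, r i ≠ p)
    (X : Matrix α β R) (q : κ) : place r c X p q = 0 := by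
  simp [place_apply, mul_apply, one_apply, Ne.symm (hp _)]

lemma place_apply_of_forall_ne_right (r : α → ι) {c : β → κ} {q : κ} (hq : ∀ j, c j ≠ q)
    (X : Matrix α β R) (p : ι) : place r c X p q = 0 := by
  simp [place_apply, mul_apply, one_apply, hq]

lemma place_place [Fintype α₂] [Fintype β₂] [DecidableEq α] [DecidableEq β] (r : α → ι)
    (c : β → κ) (f : α₂ → α) (g : β₂ → β) (X : Matrix α₂ β₂ R) :
    place r c (place f g X) = place (r ∘ f) (c ∘ g) X := by
  simp only [place_apply, Matrix.mul_assoc, submatrix_one_id_mul]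
  simp only [← Matrix.mul_assoc, mul_submatrix_id_one, submatrix_submatrix]
  rfl

lemma place_mul_place [Fintype ι] {r : α → ι} {c : β → ι} (h : ∀ i j, r i ≠ c j)
    (X Y : Matrix α β R) : place r c X * place r c Y = 0 := by
  have hcr : (1 : Matrix ι ι R).submatrix c id * (1 : Matrix ι ι R).submatrix id r = 0 := by
    rw [submatrix_one_id_mul]
    ext j i
    exact one_apply_ne (h i j).symm
  simp only [place_apply, Matrix.mul_assoc]
  simp [← Matrix.mul_assoc ((1 : Matrix ι ι R).submatrix c id), hcr]

lemma trace_mul_place [Fintype ι] [Fintype κ] (r : α → ι) (c : β → κ) (T : Matrix κ ι R)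
    (X : Matrix α β R) : (T * place r c X).trace = (T.submatrix c r * X).trace := by
  rw [place_apply, ← Matrix.mul_assoc, trace_mul_comm, ← Matrix.mul_assoc, ← Matrix.mul_assoc,
    submatrix_one_id_mul, mul_submatrix_id_one]
  rfl

lemma place_equiv [DecidableEq ι'] [DecidableEq κ'] (e : α ≃ ι') (e' : β ≃ κ')
    (M : Matrix α β R) : place e e' M = M.submatrix e.symm e'.symm := by
  have := Finite.of_equiv _ e
  have := Finite.of_equiv _ e'
  rw [place_apply, one_submatrix_mul, mul_submatrix_one]
  rfl

lemma reindex_place [Fintype ι] [Fintype κ] [DecidableEq ι'] [DecidableEq κ'] (e : ι ≃ ι')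
    (e' : κ ≃ κ') (r : α → ι) (c : β → κ) (X : Matrix α β R) :
    reindex e e' (place r c X) = place (e ∘ r) (e' ∘ c) X := by
  rw [reindex_apply, ← place_equiv, place_place]

lemma fromBlocks_zero_eq_place [DecidableEq α] [DecidableEq β] (M : Matrix α β R) :
    fromBlocks M 0 0 (0 : Matrix ι κ R) = place Sum.inl Sum.inl M := by
  ext (p | p) (q | q) <;> simp [place_apply, mul_apply, one_apply]

end Place

theorem exists_rank_submatrix_id_eq {K : Type*} [Field K] [Fintype m] [Fintype n]
    (M : Matrix m n K) {p : ℕ} (hp : M.rank ≤ p) (hpm : p ≤ Fintype.card m) :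
    ∃ f : Fin p ↪ m, (M.submatrix f id).rank = M.rank := by
  obtain ⟨κ, a, ha, hspan, hli⟩ := exists_linearIndependent' K M.row
  have : Fintype κ := Fintype.ofInjective a ha
  have hκ : Fintype.card κ = M.rank := by
    rw [rank_eq_finrank_span_row, ← hspan, finrank_span_eq_card hli]
  -- the rows indexed by `a` span the row space; enlarge `a` to `p` distinct rows
  let h : κ ↪ Fin p := (Fintype.equivFin κ).toEmbedding.trans (Fin.castLEEmb (hκ ▸ hp))
  let d : Fin p ↪ m := (Fin.castLEEmb hpm).trans (Fintype.equivFin m).symm.toEmbedding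
  obtain ⟨σ, hσ⟩ := Equiv.Perm.exists_extending_pair (d ∘ h) a (d.injective.comp h.injective) ha
  refine ⟨d.trans σ.toEmbedding, le_antisymm (rank_submatrix_le _ _ _) ?_⟩
  rw [rank_eq_finrank_span_row, rank_eq_finrank_span_row, ← hspan]
  exact Submodule.finrank_mono (Submodule.span_mono (Set.range_subset_iff.mpr fun x =>
    ⟨h x, by rw [Function.comp_apply, ← hσ x]; rfl⟩))

theorem exists_rank_submatrix_eq {K : Type*} [Field K] [Fintype m] [Fintype n]
    (M : Matrix m n K) {p q : ℕ} (hp : M.rank ≤ p) (hpm : p ≤ Fintype.card m)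
    (hq : M.rank ≤ q) (hqn : q ≤ Fintype.card n) :
    ∃ (f : Fin p ↪ m) (g : Fin q ↪ n), (M.submatrix f g).rank = M.rank := by
  obtain ⟨g, hg⟩ := Mᵀ.exists_rank_submatrix_id_eq (M.rank_transpose ▸ hq) hqn
  have hg' : (M.submatrix id g).rank = M.rank := by
    rw [← rank_transpose, transpose_submatrix, hg, rank_transpose]
  obtain ⟨f, hf⟩ := (M.submatrix id g).exists_rank_submatrix_id_eq (hg'.symm ▸ hp) hpm
  exact ⟨f, g, by rwa [submatrix_submatrix, hg'] at hf⟩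

end Matrix

section BlockUnipotent

variable {R : Type*} [CommRing R] {ι α β : Type*} [Fintype ι] [DecidableEq ι] [Fintype α]
  [Fintype β]

lemma place_inl_inr_mul_place (e : α ⊕ β ↪ ι) (X Y : Matrix α β R) :
    place (e ∘ .inl) (e ∘ .inr) X * place (e ∘ .inl) (e ∘ .inr) Y = 0 :=
  place_mul_place (fun _ _ => e.injective.ne Sum.inl_ne_inr) X Y

/-- `U_{a,b}` moved to the rows `e ∘ inl` and the columns `e ∘ inr`, as a homomorphism from
`(M_{α,β}, +)`. -/
def blockUnipotent (e : α ⊕ β ↪ ι) : AddChar (Matrix α β R) (GL ι R) where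
  toFun X :=
    { val := 1 + place (e ∘ .inl) (e ∘ .inr) X
      inv := 1 - place (e ∘ .inl) (e ∘ .inr) X
      val_inv := by
        rw [← (Commute.one_left _).mul_self_sub_mul_self_eq, place_inl_inr_mul_place, mul_one,
          sub_zero]
      inv_val := by
        rw [← (Commute.one_left _).mul_self_sub_mul_self_eq', place_inl_inr_mul_place, mul_one,
          sub_zero] }
  map_zero_eq_one' := Units.ext (by simp)
  map_add_eq_mul' X Y := Units.ext (by simp [add_mul, mul_add, place_inl_inr_mul_place, add_assoc])

lemma coe_blockUnipotent (e : α ⊕ β ↪ ι) (X : Matrix α β R) :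
    (blockUnipotent e X : Matrix ι ι R) = 1 + place (e ∘ .inl) (e ∘ .inr) X :=
  rfl

lemma blockUnipotent_sumMap [DecidableEq α] [DecidableEq β] {α₂ β₂ : Type*} [Fintype α₂]
    [Fintype β₂] (e : α ⊕ β ↪ ι) (f : α₂ ↪ α) (g : β₂ ↪ β) :
    blockUnipotent ((f.sumMap g).trans e) =
      (blockUnipotent e).compAddMonoidHom (place (R := R) f g) := by
  refine AddChar.ext _ _ fun X => Units.ext ?_
  rw [AddChar.compAddMonoidHom_apply, coe_blockUnipotent, coe_blockUnipotent, place_place]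
  rfl

lemma coe_conj_permMatrix (σ : Equiv.Perm ι) (M : GL ι R) :
    ((MulAut.conj (Units.map permMatrixHom (toUnits σ)) M : GL ι R) : Matrix ι ι R) =
      reindexAlgEquiv R R σ M := by
  simp [PEquiv.toMatrix_toPEquiv_mul, PEquiv.mul_toMatrix_toPEquiv]

lemma conj_permMatrix_blockUnipotent (σ : Equiv.Perm ι) (e : α ⊕ β ↪ ι) :
    (MulAut.conj (Units.map permMatrixHom (toUnits σ))).toMonoidHom.compAddChar
      (blockUnipotent e) = blockUnipotent (R := R) (e.trans σ.toEmbedding) := by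
  refine AddChar.ext _ _ fun X => Units.ext ?_
  rw [MonoidHom.compAddChar_apply, Function.comp_apply, MulEquiv.coe_toMonoidHom,
    coe_conj_permMatrix, coe_blockUnipotent, map_add, map_one, coe_reindexAlgEquiv,
    reindex_place, coe_blockUnipotent]
  rfl

end BlockUnipotent

theorem Module.End.exists_common_eigenvector {k V ι : Type*} [Field k] [IsAlgClosed k]
    [AddCommGroup V] [Module k V] [FiniteDimensional k V] (f : ι → Module.End k V)
    (hf : ∀ i j, Commute (f i) (f j)) {W : Submodule k V} (hW : W ≠ ⊥)
    (hWf : ∀ i, Set.MapsTo (f i) W W) :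
    ∃ v ∈ W, v ≠ 0 ∧ ∀ i, ∃ μ : k, f i v = μ • v := by
  obtain ⟨W₀, ⟨hW₀W, hW₀, hW₀f⟩, hmin⟩ := wellFounded_lt.has_min
    {W' : Submodule k V | W' ≤ W ∧ W' ≠ ⊥ ∧ ∀ i, Set.MapsTo (f i) W' W'} ⟨W, le_rfl, hW, hWf⟩
  obtain ⟨v, hv, hv0⟩ := W₀.ne_bot_iff.mp hW₀
  refine ⟨v, hW₀W hv, hv0, fun i => ?_⟩
  have : Nontrivial W₀ := Submodule.nontrivial_iff_ne_bot.mpr hW₀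
  obtain ⟨μ, hμ⟩ := Module.End.exists_eigenvalue ((f i).restrict (hW₀f i))
  -- `W₀ ⊓ eigenspace` is again nonzero and invariant, so minimality forces it to be `W₀`
  have hE : W₀ ⊓ (f i).eigenspace μ = W₀ := by
    by_contra hne
    refine hmin _ ⟨inf_le_left.trans hW₀W, ?_, fun j => ?_⟩ (inf_le_left.lt_of_ne hne)
    · obtain ⟨w, hw, hw0⟩ := hμ.exists_hasEigenvector
      refine (Submodule.ne_bot_iff _).mpr ⟨w, ⟨w.2, ?_⟩, by simpa using hw0⟩
      exact Module.End.eigenspace_restrict_le_eigenspace (f i) (hW₀f i) μ ⟨w, hw, rfl⟩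
    · exact (hW₀f j).inter_inter (Module.End.mapsTo_genEigenspace_of_comm (hf i j) μ 1)
  exact ⟨μ, Module.End.mem_eigenspace_iff.mp (inf_eq_left.mp hE hv)⟩

section Eigenchar

variable {k G A V : Type*} [Field k] [Group G] [AddCommGroup V] [Module k V]

def HasEigenchar [AddMonoid A] (π : Representation k G V) (u : AddChar A G)
    (ψ : AddChar A k) : Prop :=
  ∃ v ≠ (0 : V), ∀ a, π (u a) v = ψ a • v

variable {π : Representation k G V}

lemma HasEigenchar.conj [AddMonoid A] {u : AddChar A G} {ψ : AddChar A k}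
    (h : HasEigenchar π u ψ) (g : G) :
    HasEigenchar π ((MulAut.conj g).toMonoidHom.compAddChar u) ψ := by
  obtain ⟨v, hv, hvψ⟩ := h
  refine ⟨π g v, fun h0 => hv ?_, fun a => ?_⟩
  · simpa using congrArg (π g⁻¹) h0
  · simp [hvψ]

lemma HasEigenchar.compAddMonoidHom [AddMonoid A] {A₂ : Type*} [AddMonoid A₂]
    {u : AddChar A G} {ψ : AddChar A k} (h : HasEigenchar π u ψ) (j : A₂ →+ A) :
    HasEigenchar π (u.compAddMonoidHom j) (ψ.compAddMonoidHom j) :=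
  let ⟨v, hv, hvψ⟩ := h
  ⟨v, hv, fun a => hvψ (j a)⟩

lemma exists_addChar_eq_smul [AddMonoid A] (u : AddChar A G) {v : V} (hv : v ≠ 0)
    (h : ∀ a, ∃ μ : k, π (u a) v = μ • v) : ∃ ψ : AddChar A k, ∀ a, π (u a) v = ψ a • v := by
  choose μ hμ using h
  have hμ_eq : ∀ a c, π (u a) v = c • v → μ a = c := fun a c hc =>
    smul_left_injective k hv ((hμ a).symm.trans hc)
  refine ⟨{ toFun := μ
            map_zero_eq_one' := hμ_eq 0 1 (by simp)
            map_add_eq_mul' := fun a b => hμ_eq _ _ ?_ }, hμ⟩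
  rw [AddChar.map_add_eq_mul, map_mul, Module.End.mul_apply, hμ b, map_smul, hμ a, smul_smul,
    mul_comm]

theorem HasEigenchar.exists_extend [IsAlgClosed k] [FiniteDimensional k V] [AddCommGroup A]
    {A₂ : Type*} [AddMonoid A₂] {u : AddChar A G} (j : A₂ →+ A) {ψ₂ : AddChar A₂ k}
    (h : HasEigenchar π (u.compAddMonoidHom j) ψ₂) :
    ∃ ψ : AddChar A k, HasEigenchar π u ψ ∧ ψ.compAddMonoidHom j = ψ₂ := by
  obtain ⟨v₀, hv₀, hv₀ψ⟩ := h
  have hcomm : ∀ a b, Commute (π (u a)) (π (u b)) := fun a b => by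
    rw [Commute, SemiconjBy, ← map_mul π, ← map_mul π, ← AddChar.map_add_eq_mul,
      ← AddChar.map_add_eq_mul, add_comm]
  let W := ⨅ b, Module.End.eigenspace (π (u (j b))) (ψ₂ b)
  have hv₀W : v₀ ∈ W :=
    Submodule.mem_iInf _ |>.mpr fun b => Module.End.mem_eigenspace_iff.mpr (hv₀ψ b)
  obtain ⟨v, hvW, hv, hμ⟩ := Module.End.exists_common_eigenvector (fun a => π (u a)) hcomm
    (W.ne_bot_iff.mpr ⟨v₀, hv₀W, hv₀⟩) fun a w hw => Submodule.mem_iInf _ |>.mpr fun b =>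
      Module.End.mapsTo_genEigenspace_of_comm (hcomm (j b) a) _ _ ((Submodule.mem_iInf _).mp hw b)
  obtain ⟨ψ, hψ⟩ := exists_addChar_eq_smul u hv hμ
  refine ⟨ψ, ⟨v, hv, hψ⟩, AddChar.ext _ _ fun b => smul_left_injective k hv ?_⟩
  exact (hψ (j b)).symm.trans (Module.End.mem_eigenspace_iff.mp ((Submodule.mem_iInf _).mp hvW b))

end Eigenchar

section GammaChar

variable {K M α β : Type*} [Field K] [CommMonoid M] [Fintype α] [Fintype β]

def gammaChar (χ₀ : AddChar K M) (T : Matrix β α K) : AddChar (Matrix α β K) M where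
  toFun X := χ₀ (T * X).trace
  map_zero_eq_one' := by simp
  map_add_eq_mul' X Y := by rw [Matrix.mul_add, trace_add, AddChar.map_add_eq_mul]

lemma gammaChar_apply (χ₀ : AddChar K M) (T : Matrix β α K) (X : Matrix α β K) :
    gammaChar χ₀ T X = χ₀ (T * X).trace :=
  rfl

lemma gammaChar_comp_place {α₂ β₂ : Type*} [Fintype α₂] [Fintype β₂] [DecidableEq α]
    [DecidableEq β] (χ₀ : AddChar K M) (T : Matrix β α K) (f : α₂ → α) (g : β₂ → β) :
    (gammaChar χ₀ T).compAddMonoidHom (place f g) = gammaChar χ₀ (T.submatrix g f) :=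
  AddChar.ext _ _ fun X => by
    rw [AddChar.compAddMonoidHom_apply, gammaChar_apply, gammaChar_apply, trace_mul_place]

lemma gammaChar_injective {χ₀ : AddChar K M} (hχ₀ : χ₀ ≠ 1) :
    Function.Injective (gammaChar χ₀ : Matrix β α K → AddChar (Matrix α β K) M) := by
  classical
  intro T T' h
  ext j i
  apply AddChar.to_mulShift_inj_of_isPrimitive (AddChar.IsPrimitive.of_ne_one hχ₀)
  ext z
  simpa [gammaChar_apply, trace_mul_single, mul_comm] using DFunLike.congr_fun h (single i j z)

lemma gammaChar_bijective [Fintype K] {χ₀ : AddChar K ℂ} (hχ₀ : χ₀ ≠ 1) :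
    Function.Bijective (gammaChar χ₀ : Matrix β α K → AddChar (Matrix α β K) ℂ) := by
  classical
  rw [Fintype.bijective_iff_injective_and_card, AddChar.card_eq]
  exact ⟨gammaChar_injective hχ₀, Fintype.card_congr (transposeAddEquiv β α K).toEquiv⟩

end GammaChar

section Position

variable {K : Type*} [Field K] {ι α β V : Type*} [Fintype ι] [DecidableEq ι] [Fintype α]
  [Fintype β] [AddCommGroup V] [Module ℂ V] {π : Representation ℂ (GL ι K) V}

lemma HasEigenchar.reposition {e : α ⊕ β ↪ ι} {ψ : AddChar (Matrix α β K) ℂ}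
    (h : HasEigenchar π (blockUnipotent e) ψ) (e' : α ⊕ β ↪ ι) :
    HasEigenchar π (blockUnipotent e') ψ := by
  obtain ⟨σ, hσ⟩ := Equiv.Perm.exists_extending_pair e e' e.injective e'.injective
  have he' : e' = e.trans σ.toEmbedding := Function.Embedding.ext fun x => (hσ x).symm
  rw [he', ← conj_permMatrix_blockUnipotent]
  exact h.conj _

variable {α₂ β₂ : Type*} [Fintype α₂] [Fintype β₂]

lemma HasEigenchar.submatrix {e : α ⊕ β ↪ ι} {χ₀ : AddChar K ℂ} {T : Matrix β α K}
    (h : HasEigenchar π (blockUnipotent e) (gammaChar χ₀ T)) (f : α₂ ↪ α) (g : β₂ ↪ β)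
    (e₂ : α₂ ⊕ β₂ ↪ ι) :
    HasEigenchar π (blockUnipotent e₂) (gammaChar χ₀ (T.submatrix g f)) := by
  classical
  have h₂ : HasEigenchar π (blockUnipotent ((f.sumMap g).trans e))
      (gammaChar χ₀ (T.submatrix g f)) := by
    rw [blockUnipotent_sumMap, ← gammaChar_comp_place]
    exact h.compAddMonoidHom (place f g)
  exact h₂.reposition e₂

theorem HasEigenchar.exists_submatrix_eq [Fintype K] [FiniteDimensional ℂ V]
    {χ₀ : AddChar K ℂ} (hχ₀ : χ₀ ≠ 1) {e₂ : α₂ ⊕ β₂ ↪ ι} {T₂ : Matrix β₂ α₂ K}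
    (h : HasEigenchar π (blockUnipotent e₂) (gammaChar χ₀ T₂)) (e : α ⊕ β ↪ ι) (f : α₂ ↪ α)
    (g : β₂ ↪ β) :
    ∃ T, HasEigenchar π (blockUnipotent e) (gammaChar χ₀ T) ∧ T.submatrix g f = T₂ := by
  classical
  have h' := h.reposition ((f.sumMap g).trans e)
  rw [blockUnipotent_sumMap] at h'
  obtain ⟨ψ, hψ, hψT₂⟩ := HasEigenchar.exists_extend (A := Matrix α β K) (place f g) h'
  obtain ⟨T, rfl⟩ := (gammaChar_bijective hχ₀).2 ψ
  refine ⟨T, hψ, gammaChar_injective hχ₀ ?_⟩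
  rw [← gammaChar_comp_place, hψT₂]

end Position

namespace Stmt8

def uBlock (n a b : ℕ) (hab : a + b ≤ n) : Fin a ⊕ Fin b ↪ Fin n :=
  ⟨Sum.elim (Fin.castLE (by omega)) fun j => ⟨n - b + j, by omega⟩,
    Function.Injective.sumElim (Fin.castLE_injective _)
      (fun j j' h => Fin.ext (by simpa using h))
      fun i j h => by simp [Fin.ext_iff] at h; omega⟩

lemma blockEmbed_eq_place {F : Type} [Field F] {n a b : ℕ} (hab : a + b ≤ n)
    (X : Matrix (Fin a) (Fin b) F) :
    blockEmbed n a b X = place (uBlock n a b hab ∘ .inl) (uBlock n a b hab ∘ .inr) X := by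
  have hr := (uBlock n a b hab).injective.comp Sum.inl_injective
  have hc := (uBlock n a b hab).injective.comp Sum.inr_injective
  ext p q
  simp only [blockEmbed, of_apply]
  split_ifs with hp hq
  · have hq' : (uBlock n a b hab ∘ .inr) ⟨q - (n - b), hq.2⟩ = q :=
      Fin.ext (by simp [uBlock]; omega)
    rw [← place_apply_apply hr hc X ⟨p, hp⟩ ⟨q - (n - b), hq.2⟩, hq']
    rfl
  · refine (place_apply_of_forall_ne_right _ (fun j h => hq ?_) X p).symm
    simp [uBlock, ← h]
  · refine (place_apply_of_forall_ne_left _ (fun i h => hp ?_) X q).symm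
    simp [uBlock, ← h]

lemma glEmbed_compAddChar_blockUnipotent {F : Type} [Field F] {m n : ℕ} (hmn : m ≤ n)
    {α β : Type*} [Fintype α] [Fintype β] (e : α ⊕ β ↪ Fin m) :
    (glEmbed (F := F) hmn).compAddChar (blockUnipotent e) =
      blockUnipotent (e.trans (Fin.castLEEmb hmn)) := by
  refine AddChar.ext _ _ fun X => Units.ext ?_
  have hdiag : fromBlocks (blockUnipotent e X : Matrix (Fin m) (Fin m) F) 0 0
      (1 : Matrix (Fin (n - m)) (Fin (n - m)) F) =
        1 + fromBlocks (place (e ∘ .inl) (e ∘ .inr) X) 0 0 0 := by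
    rw [← fromBlocks_one, fromBlocks_add, coe_blockUnipotent]
    simp
  change reindexAlgEquiv F F _ (fromBlocks (blockUnipotent e X : Matrix (Fin m) (Fin m) F) 0 0 1)
    = _
  rw [hdiag, map_add, map_one, coe_reindexAlgEquiv, fromBlocks_zero_eq_place, place_place,
    reindex_place, coe_blockUnipotent]
  rfl

variable {F : Type} [Field F] [Fintype F] [DecidableEq F]

lemma uU_eq_blockUnipotent {n a b : ℕ} (hab : a + b ≤ n) (X : Matrix (Fin a) (Fin b) F) :
    uU n a b hab X = blockUnipotent (uBlock n a b hab) X :=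
  Units.ext (congrArg (1 + ·) (blockEmbed_eq_place hab X))

lemma charAppears_iff_hasEigenchar {V : Type} [AddCommGroup V] [Module ℂ V]
    (χ₀ : AddChar F ℂ) {n : ℕ} (π : Representation ℂ (GL (Fin n) F) V) {a b : ℕ}
    (hab : a + b ≤ n) (T : Matrix (Fin b) (Fin a) F) :
    CharAppears χ₀ π hab T ↔
      HasEigenchar π (blockUnipotent (uBlock n a b hab)) (gammaChar χ₀ T) := by
  simp only [CharAppears, HasEigenchar, uU_eq_blockUnipotent, gammaChar_apply]

lemma charAppears_comp_glEmbed_iff {V : Type} [AddCommGroup V] [Module ℂ V]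
    (χ₀ : AddChar F ℂ) {m n : ℕ} (hmn : m ≤ n) (π : Representation ℂ (GL (Fin n) F) V)
    {a b : ℕ} (hab : a + b ≤ m) (T : Matrix (Fin b) (Fin a) F) :
    CharAppears χ₀ (π.comp (glEmbed hmn)) hab T ↔
      HasEigenchar π (blockUnipotent ((uBlock m a b hab).trans (Fin.castLEEmb hmn)))
        (gammaChar χ₀ T) := by
  rw [charAppears_iff_hasEigenchar, ← glEmbed_compAddChar_blockUnipotent]
  rfl

theorem uRank_restrict_general
    (χ₀ : AddChar F ℂ) (hχ₀ : χ₀ ≠ 1)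
    {n m : ℕ} (hmn : m ≤ n)
    {V : Type} [AddCommGroup V] [Module ℂ V] [FiniteDimensional ℂ V]
    (π : Representation ℂ (GL (Fin n) F) V)
    {k : ℕ} (hπ : HasURank χ₀ π k)
    (hkm : 2 * k + 1 < m) :
    HasURank χ₀ (π.comp (glEmbed hmn)) k := by
  obtain ⟨⟨T₀, hT₀, hT₀k⟩, hπk⟩ := hπ
  rw [charAppears_iff_hasEigenchar] at hT₀
  simp only [charAppears_iff_hasEigenchar] at hπk
  simp only [HasURank, HasRankAB, charAppears_comp_glEmbed_iff]
  have hbound : ∀ T, HasEigenchar π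
      (blockUnipotent ((uBlock m (m / 2) (m - m / 2) (by omega)).trans (Fin.castLEEmb hmn)))
      (gammaChar χ₀ T) → T.rank ≤ k := fun T hT => by
    obtain ⟨T', hT', rfl⟩ := hT.exists_submatrix_eq hχ₀ (uBlock n (n / 2) (n - n / 2) (by omega))
      (Fin.castLEEmb (show m / 2 ≤ n / 2 by omega))
      (Fin.castLEEmb (show m - m / 2 ≤ n - n / 2 by omega))
    exact (rank_submatrix_le _ _ _).trans (hπk T' hT')
  obtain ⟨g, f, hgf⟩ := T₀.exists_rank_submatrix_eq (p := m - m / 2) (q := m / 2)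
    (by omega) (by rw [Fintype.card_fin]; omega) (by omega)
    (by rw [Fintype.card_fin]; omega)
  exact ⟨⟨T₀.submatrix g f, hT₀.submatrix f g _, hgf.trans hT₀k⟩, hbound⟩

/-- Proposition 6.1.1.  Here `k < (n-1)/2` and `k < (m-1)/2`
are expressed as `2*k + 1 < n` and `2*k + 1 < m`. -/
theorem uRank_restrict
    (χ₀ : AddChar F ℂ) (hχ₀ : χ₀ ≠ 1)
    {n m : ℕ} (hmn : m ≤ n)
    {V : Type} [AddCommGroup V] [Module ℂ V] [FiniteDimensional ℂ V]
    (π : Representation ℂ (GL (Fin n) F) V)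
    {k : ℕ} (hπ : HasURank χ₀ π k)
    (hkn : 2 * k + 1 < n) (hkm : 2 * k + 1 < m) :
    HasURank χ₀ (π.comp (glEmbed hmn)) k :=
  uRank_restrict_general χ₀ hχ₀ hmn π hπ hkm

end Stmt8
end

section
/- Let F be a field and (W,B) a symplectic vector space over F with dim W = 2n (B a nondegenerate alternating bilinear form). Equip W ⊕ W with the symplectic form B̃((w₁,w₂),(w₁',w₂')) = B(w₁,w₁') − B(w₂,w₂'). If M and L are Lagrangian subspaces of (W⊕W, B̃) (i.e., totally isotropic subspaces of dimension 2n), then the composition M∘L := {(w,w') ∈ W⊕W : there exists w'' ∈ W with (w,w'') ∈ L and (w'',w') ∈ M} is again a Lagrangian subspace of (W⊕W, B̃). -/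
/-!
`M ∘ L` is isotropic because the middle terms cancel:
`B̃((a,c),(a',c')) = B̃((a,b),(a',b')) + B̃((b,c),(b',c'))`, so, `B̃` being nondegenerate on the
`4n`-dimensional space `W ⊕ W`, `dim (M ∘ L) ≤ 2n`.

For the reverse inequality, `M ∘ L` is the image under `((a,b),(b',c)) ↦ (a,c)` of the fibre
product `{(x, y) ∈ L × M | x.2 = y.1}`. Rank–nullity, applied twice, gives
`dim L + dim M ≤ dim (M ∘ L) + dim S + dim K` with `S = pr₂ L + pr₁ M` and
`K = {u | (0,u) ∈ L, (u,0) ∈ M}`. Isotropy of `L` and `M` puts `K` inside `S^⊥`, so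
`dim S + dim K ≤ 2n` and hence `dim (M ∘ L) ≥ 2n`.
-/

set_option linter.unusedSectionVars false

namespace Stmt10

variable {F W : Type} [Field F] [AddCommGroup W] [Module F W]

/-- The difference form `B̃((w₁,w₂),(w₁',w₂')) = B(w₁,w₁') − B(w₂,w₂')` on
`W ⊕ W`. -/
def doubleForm (B : W →ₗ[F] W →ₗ[F] F) (p q : W × W) : F :=
  B p.1 q.1 - B p.2 q.2

/-- A Lagrangian subspace of `(W ⊕ W, B̃)` for `dim W = 2n`: totally isotropic
of dimension `2n`. -/
def IsLagrangian (B : W →ₗ[F] W →ₗ[F] F) (nn : ℕ) (L : Submodule F (W × W)) : Prop :=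
  Module.finrank F ↥L = nn ∧ ∀ p ∈ L, ∀ q ∈ L, doubleForm B p q = 0

/-- The composition `M ∘ L = {(w,w') | ∃ w'', (w,w'') ∈ L ∧ (w'',w') ∈ M}`. -/
def composeLag (M L : Submodule F (W × W)) : Submodule F (W × W) where
  carrier := {p | ∃ w'' : W, (p.1, w'') ∈ L ∧ (w'', p.2) ∈ M}
  add_mem' := by
    rintro p q ⟨a, ha1, ha2⟩ ⟨b, hb1, hb2⟩
    exact ⟨a + b, L.add_mem ha1 hb1, M.add_mem ha2 hb2⟩
  zero_mem' := ⟨0, L.zero_mem, M.zero_mem⟩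
  smul_mem' := by
    rintro c p ⟨a, h1, h2⟩
    exact ⟨c • a, L.smul_mem c h1, M.smul_mem c h2⟩

section FiniteDimensional

variable {K V V₂ : Type*} [Field K] [AddCommGroup V] [Module K V] [AddCommGroup V₂]
  [Module K V₂]

theorem _root_.Submodule.finrank_prod [FiniteDimensional K V] [FiniteDimensional K V₂]
    (p : Submodule K V) (q : Submodule K V₂) :
    Module.finrank K (p.prod q) = Module.finrank K p + Module.finrank K q := by
  rw [← p.range_subtype, ← q.range_subtype, ← LinearMap.range_prodMap,
    LinearMap.finrank_range_of_inj
      (Prod.map_injective.2 ⟨p.injective_subtype, q.injective_subtype⟩),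
    Module.finrank_prod, p.range_subtype, q.range_subtype]

theorem _root_.Submodule.finrank_map_add_finrank_inf_ker [FiniteDimensional K V]
    (f : V →ₗ[K] V₂) (N : Submodule K V) :
    Module.finrank K (N.map f) + Module.finrank K ↥(N ⊓ LinearMap.ker f) =
      Module.finrank K N := by
  rw [← LinearMap.range_domRestrict, ← Submodule.map_comap_subtype,
    Submodule.finrank_map_subtype_eq, ← LinearMap.ker_domRestrict]
  exact LinearMap.finrank_range_add_finrank_ker _

theorem _root_.LinearMap.BilinForm.finrank_add_finrank_le_of_le_orthogonal
    [FiniteDimensional K V] {B : LinearMap.BilinForm K V} (hB : B.SeparatingLeft)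
    {U U' : Submodule K V} (h : U' ≤ B.orthogonal U) :
    Module.finrank K U + Module.finrank K U' ≤ Module.finrank K V := by
  have hU := LinearMap.BilinForm.finrank_add_finrank_orthogonal' (B := B) U
  rw [LinearMap.separatingLeft_iff_ker_eq_bot.1 hB, inf_bot_eq, finrank_bot, add_zero] at hU
  linarith [Submodule.finrank_mono h]

end FiniteDimensional

def doubleBilinForm (B : W →ₗ[F] W →ₗ[F] F) : LinearMap.BilinForm F (W × W) :=
  B.compl₁₂ (LinearMap.fst F W W) (LinearMap.fst F W W) -
    B.compl₁₂ (LinearMap.snd F W W) (LinearMap.snd F W W)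

theorem doubleBilinForm_apply (B : W →ₗ[F] W →ₗ[F] F) (p q : W × W) :
    doubleBilinForm B p q = doubleForm B p q :=
  rfl

theorem separatingLeft_doubleBilinForm {B : W →ₗ[F] W →ₗ[F] F} (hB : B.SeparatingLeft) :
    (doubleBilinForm B).SeparatingLeft := by
  intro p hp
  refine Prod.ext (hB _ fun u => ?_) (hB _ fun u => ?_)
  · simpa [doubleBilinForm_apply, doubleForm] using hp (u, 0)
  · simpa [doubleBilinForm_apply, doubleForm] using hp (0, u)

theorem doubleForm_eq_zero_of_mem_composeLag {B : W →ₗ[F] W →ₗ[F] F}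
    {M L : Submodule F (W × W)} (hM : ∀ p ∈ M, ∀ q ∈ M, doubleForm B p q = 0)
    (hL : ∀ p ∈ L, ∀ q ∈ L, doubleForm B p q = 0) :
    ∀ p ∈ composeLag M L, ∀ q ∈ composeLag M L, doubleForm B p q = 0 := by
  rintro p ⟨u, hpu, hup⟩ q ⟨v, hqv, hvq⟩
  have hL' := hL _ hpu _ hqv
  have hM' := hM _ hup _ hvq
  simp only [doubleForm] at hL' hM' ⊢
  linear_combination hL' + hM'

theorem comap_inr_inf_comap_inl_le_orthogonal {B : W →ₗ[F] W →ₗ[F] F}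
    {M L : Submodule F (W × W)} (hM : ∀ p ∈ M, ∀ q ∈ M, doubleForm B p q = 0)
    (hL : ∀ p ∈ L, ∀ q ∈ L, doubleForm B p q = 0) :
    L.comap (LinearMap.inr F W W) ⊓ M.comap (LinearMap.inl F W W) ≤
      LinearMap.BilinForm.orthogonal B
        (L.map (LinearMap.snd F W W) ⊔ M.map (LinearMap.fst F W W)) := by
  rintro u ⟨huL, huM⟩
  refine (LinearMap.BilinForm.mem_orthogonal_iff).2 fun s hs => ?_
  obtain ⟨_, ⟨l, hl, rfl⟩, _, ⟨m, hm, rfl⟩, rfl⟩ := Submodule.mem_sup.1 hs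
  have hlu := hL l hl _ huL
  have hmu := hM m hm _ huM
  simp only [doubleForm, LinearMap.inr_apply, LinearMap.inl_apply, map_zero] at hlu hmu
  simp only [LinearMap.snd_apply, LinearMap.fst_apply, map_add, LinearMap.add_apply]
  linear_combination hmu - hlu

def middleGap : (W × W) × (W × W) →ₗ[F] W :=
  LinearMap.snd F W W ∘ₗ LinearMap.fst F (W × W) (W × W) -
    LinearMap.fst F W W ∘ₗ LinearMap.snd F (W × W) (W × W)

def outerEnds : (W × W) × (W × W) →ₗ[F] W × W :=
  (LinearMap.fst F W W ∘ₗ LinearMap.fst F (W × W) (W × W)).prod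
    (LinearMap.snd F W W ∘ₗ LinearMap.snd F (W × W) (W × W))

theorem composeLag_eq_map (M L : Submodule F (W × W)) :
    composeLag M L = (L.prod M ⊓ LinearMap.ker middleGap).map outerEnds := by
  ext ⟨a, c⟩
  constructor
  · rintro ⟨b, hab, hbc⟩
    exact ⟨((a, b), (b, c)), ⟨⟨hab, hbc⟩, by simp [middleGap]⟩, rfl⟩
  · rintro ⟨⟨⟨a', b⟩, ⟨b', c'⟩⟩, ⟨⟨hab, hbc⟩, hgap⟩, he⟩
    have hb : b = b' := sub_eq_zero.1 hgap
    obtain ⟨rfl, rfl⟩ := Prod.ext_iff.1 he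
    exact ⟨b, hab, hb ▸ hbc⟩

theorem finrank_add_finrank_le_finrank_composeLag_add [FiniteDimensional F W]
    (M L : Submodule F (W × W)) :
    Module.finrank F L + Module.finrank F M ≤
      Module.finrank F (composeLag M L) +
        Module.finrank F ↥(L.map (LinearMap.snd F W W) ⊔ M.map (LinearMap.fst F W W)) +
        Module.finrank F ↥(L.comap (LinearMap.inr F W W) ⊓ M.comap (LinearMap.inl F W W)) := by
  have hgap := (L.prod M).finrank_map_add_finrank_inf_ker middleGap
  have hends := (L.prod M ⊓ LinearMap.ker middleGap).finrank_map_add_finrank_inf_ker outerEnds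
  rw [Submodule.finrank_prod] at hgap
  rw [← composeLag_eq_map] at hends
  have hS : (L.prod M).map middleGap ≤
      L.map (LinearMap.snd F W W) ⊔ M.map (LinearMap.fst F W W) := by
    rintro _ ⟨⟨l, m⟩, ⟨hl, hm⟩, rfl⟩
    exact sub_mem (Submodule.mem_sup_left ⟨l, hl, rfl⟩)
      (Submodule.mem_sup_right ⟨m, hm, rfl⟩)
  have hK : L.prod M ⊓ LinearMap.ker middleGap ⊓ LinearMap.ker outerEnds ≤
      (L.comap (LinearMap.inr F W W) ⊓ M.comap (LinearMap.inl F W W)).map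
        ((LinearMap.inr F W W).prod (LinearMap.inl F W W)) := by
    rintro ⟨⟨a, b⟩, ⟨b', c⟩⟩ ⟨⟨⟨hab, hbc⟩, hgap⟩, hends⟩
    have hb : b = b' := sub_eq_zero.1 hgap
    obtain ⟨rfl, rfl⟩ := Prod.ext_iff.1 hends
    subst hb
    exact ⟨b, ⟨hab, hbc⟩, rfl⟩
  have := Submodule.finrank_mono hS
  have := (Submodule.finrank_mono hK).trans (Submodule.finrank_map_le _ _)
  omega

theorem composeLag_isLagrangian_general
    [FiniteDimensional F W] {n : ℕ} (hW : Module.finrank F W = 2 * n)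
    (B : W →ₗ[F] W →ₗ[F] F)
    (hnondeg : ∀ w : W, (∀ u : W, B w u = 0) → w = 0)
    (M L : Submodule F (W × W))
    (hM : IsLagrangian B (2 * n) M) (hL : IsLagrangian B (2 * n) L) :
    IsLagrangian B (2 * n) (composeLag M L) := by
  have hiso := doubleForm_eq_zero_of_mem_composeLag hM.2 hL.2
  have hWW : Module.finrank F (W × W) = 2 * n + 2 * n := by
    rw [Module.finrank_prod, hW]
  refine ⟨le_antisymm ?_ ?_, hiso⟩
  · have hupper := (doubleBilinForm B).finrank_add_finrank_le_of_le_orthogonal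
      (separatingLeft_doubleBilinForm hnondeg) (U := composeLag M L) fun p hp q hq => hiso q hq p hp
    omega
  · have hcount := finrank_add_finrank_le_finrank_composeLag_add M L
    have horth := LinearMap.BilinForm.finrank_add_finrank_le_of_le_orthogonal hnondeg
      (comap_inr_inf_comap_inl_le_orthogonal hM.2 hL.2)
    rw [hL.1, hM.1] at hcount
    omega

/-- (Proposition 7.3.7 i)): the composition of two Lagrangian
subspaces of `(W ⊕ W, B̃)` is Lagrangian. -/
theorem composeLag_isLagrangian
    [FiniteDimensional F W] {n : ℕ} (hW : Module.finrank F W = 2 * n)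
    (B : W →ₗ[F] W →ₗ[F] F)
    (halt : ∀ w : W, B w w = 0)
    (hnondeg : ∀ w : W, (∀ u : W, B w u = 0) → w = 0)
    (M L : Submodule F (W × W))
    (hM : IsLagrangian B (2 * n) M) (hL : IsLagrangian B (2 * n) L) :
    IsLagrangian B (2 * n) (composeLag M L) :=
  composeLag_isLagrangian_general hW B hnondeg M L hM hL

end Stmt10
end
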